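/- arXiv:1004.4723 — 5 statements merged into one kernel-verified Lean document; each statement's English description precedes it below -/
import Mathlib

section
/- Let n ≥ 2 and q ∈ ℂ[x,z,t]. The hypersurface V_{n,q} = {xⁿy + z² + t³ + x·q(x,z,t) = 0} in ℂ⁴ is smooth if and only if q(0,0,0) ≠ 0. -/
open MvPolynomial

/-- For `n ≥ 2` and `q ∈ ℂ[x,z,t]`, the hypersurface `{xⁿy + z² + t³ + x·q(x,z,t) = 0}`
in `ℂ⁴` is smooth iff `q(0,0,0) ≠ 0`. Variables of `ℂ⁴`: `0 ↦ x`, `1 ↦ y`, `2 ↦ z`, `3 ↦ t`;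
`q` has variables `0 ↦ x`, `1 ↦ z`, `2 ↦ t`. -/
theorem stmt1 (n : ℕ) (hn : 2 ≤ n) (q : MvPolynomial (Fin 3) ℂ)
    (f : MvPolynomial (Fin 4) ℂ)
    (hf : f = X 0 ^ n * X 1 + X 2 ^ 2 + X 3 ^ 3 +
        X 0 * rename (![0, 2, 3] : Fin 3 → Fin 4) q) :
    (∀ a : Fin 4 → ℂ,
        ¬ (eval a f = 0 ∧ ∀ i : Fin 4, eval a (pderiv i f) = 0)) ↔
      eval (fun _ => (0 : ℂ)) q ≠ 0 := by
  subst hf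
  have hn0 : n ≠ 0 := by omega
  have hn1 : n - 1 ≠ 0 := by omega
  constructor
  · intro h hq
    apply h (fun _ => 0)
    refine ⟨?_, ?_⟩
    · have : ((fun _ => (0:ℂ)) ∘ (![0, 2, 3] : Fin 3 → Fin 4)) = fun _ => (0:ℂ) := rfl
      simp [eval_rename, this, hq, zero_pow hn0]
    · intro i
      have : ((fun _ => (0:ℂ)) ∘ (![0, 2, 3] : Fin 3 → Fin 4)) = fun _ => (0:ℂ) := rfl
      fin_cases i <;>
        simp [pderiv_mul, pderiv_pow, pderiv_X, Pi.single_apply, eval_rename, this, hq,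
          zero_pow hn0, zero_pow hn1, show constantCoeff q = 0 from by rw [← eval_zero]; exact hq]
  · rintro hq a ⟨h0, hd⟩
    have hpd : pderiv (1 : Fin 4) (rename (![0, 2, 3] : Fin 3 → Fin 4) q) = 0 := by
      apply pderiv_eq_zero_of_notMem_vars
      intro hmem
      have := vars_rename (![0, 2, 3] : Fin 3 → Fin 4) q hmem
      simp only [Finset.mem_image] at this
      obtain ⟨i, -, hi⟩ := this
      fin_cases i <;> simp at hi
    have h1 := hd 1
    simp [pderiv_mul, pderiv_pow, pderiv_X, Pi.single_apply, hpd] at h1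
    have ha0 : a 0 = 0 := h1.1
    have h2 := hd 2
    simp [pderiv_mul, pderiv_pow, pderiv_X, Pi.single_apply, ha0] at h2
    have h3 := hd 3
    simp [pderiv_mul, pderiv_pow, pderiv_X, Pi.single_apply, ha0] at h3
    have h4 := hd 0
    simp [pderiv_mul, pderiv_pow, pderiv_X, Pi.single_apply, eval_rename, ha0,
      zero_pow hn1] at h4
    apply hq
    have hcomp : (a ∘ (![0, 2, 3] : Fin 3 → Fin 4)) = fun _ => (0:ℂ) := by
      funext i
      fin_cases i <;> simp [ha0, h2, h3]
    rwa [hcomp] at h4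
end

section
/- Let n ≥ 2 and let p₁, p₂ ∈ ℂ[x] with p₁(0) ≠ 0, p₂(0) ≠ 0. Suppose there exist λ, ε ∈ ℂ* such that p₂(x) ≡ ε·p₁(λx) mod x^{n-1}, and choose μ ∈ ℂ* with ε = μ⁶λ. Then the map (x,y,z,t) ↦ (λx, λ^{-n}μ^{-6}y + λ^{-n}x^{-(n-1)}(μ^{-6}p₂(x) - λ·p₁(λx)), μ^{-3}z, μ^{-2}t) is a well-defined polynomial automorphism of ℂ⁴ mapping the hypersurface {xⁿy + z² + t³ + x·p₂(x) = 0} isomorphically onto {xⁿy + z² + t³ + x·p₁(x) = 0}. -/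
open Polynomial

section WeightedScaling

variable {K : Type*} [Field K] (n : ℕ) (l μ : K) (r : K[X])

def weightedScaling (a : Fin 4 → K) : Fin 4 → K :=
  ![l * a 0, l⁻¹ ^ n * μ⁻¹ ^ 6 * a 1 + l⁻¹ ^ n * r.eval (a 0), μ⁻¹ ^ 3 * a 2, μ⁻¹ ^ 2 * a 3]

noncomputable def weightedScalingInv : Fin 4 → MvPolynomial (Fin 4) K :=
  ![MvPolynomial.C l⁻¹ * MvPolynomial.X 0,
    MvPolynomial.C (μ ^ 6 * l ^ n) * MvPolynomial.X 1 -
      MvPolynomial.C (μ ^ 6) * aeval (MvPolynomial.C l⁻¹ * MvPolynomial.X 0) r,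
    MvPolynomial.C (μ ^ 3) * MvPolynomial.X 2,
    MvPolynomial.C (μ ^ 2) * MvPolynomial.X 3]

lemma eval_weightedScalingInv (b : Fin 4 → K) (i : Fin 4) :
    MvPolynomial.eval b (weightedScalingInv n l μ r i) =
      ![l⁻¹ * b 0, μ ^ 6 * l ^ n * b 1 - μ ^ 6 * r.eval (l⁻¹ * b 0), μ ^ 3 * b 2, μ ^ 2 * b 3] i := by
  have eval_aeval : MvPolynomial.eval b (aeval (MvPolynomial.C l⁻¹ * MvPolynomial.X 0) r) =
      r.eval (l⁻¹ * b 0) := by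
    change MvPolynomial.aeval b (aeval _ r) = _
    rw [← aeval_algHom_apply]
    simp
  fin_cases i <;> simp [weightedScalingInv, eval_aeval]

variable {l μ}

lemma eval_weightedScalingInv_weightedScaling (hl : l ≠ 0) (hμ : μ ≠ 0) (a : Fin 4 → K)
    (i : Fin 4) : MvPolynomial.eval (weightedScaling n l μ r a) (weightedScalingInv n l μ r i) =
      a i := by
  rw [eval_weightedScalingInv]
  fin_cases i <;> simp [weightedScaling] <;> field_simp
  ring

lemma weightedScaling_eval_weightedScalingInv (hl : l ≠ 0) (hμ : μ ≠ 0) (b : Fin 4 → K) :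
    weightedScaling n l μ r (fun i => MvPolynomial.eval b (weightedScalingInv n l μ r i)) = b := by
  ext i
  simp only [eval_weightedScalingInv]
  fin_cases i <;> simp [weightedScaling] <;> field_simp
  ring

lemma weightedScaling_bijective (hl : l ≠ 0) (hμ : μ ≠ 0) :
    Function.Bijective (weightedScaling n l μ r) :=
  Function.bijective_iff_has_inverse.mpr
    ⟨fun b i => MvPolynomial.eval b (weightedScalingInv n l μ r i),
      fun a => funext (eval_weightedScalingInv_weightedScaling n r hl hμ a),
      weightedScaling_eval_weightedScalingInv n r hl hμ⟩

/-- The weights make `xⁿy, z², t³` all scale by `μ⁻⁶`, and `r` absorbs the discrepancy between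
`μ⁻⁶ x p₂(x)` and `l x p₁(lx)`. -/
lemma weightedScaling_equation (hn : 1 ≤ n) (hl : l ≠ 0) {p₁ p₂ : K[X]}
    (hr : C (μ⁻¹ ^ 6) * p₂ - C l * p₁.comp (C l * X) = X ^ (n - 1) * r) (a : Fin 4 → K) :
    let b := weightedScaling n l μ r a
    b 0 ^ n * b 1 + b 2 ^ 2 + b 3 ^ 3 + b 0 * p₁.eval (b 0) =
      μ⁻¹ ^ 6 * (a 0 ^ n * a 1 + a 2 ^ 2 + a 3 ^ 3 + a 0 * p₂.eval (a 0)) := by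
  have hr_eval : μ⁻¹ ^ 6 * p₂.eval (a 0) - l * p₁.eval (l * a 0) =
      a 0 ^ (n - 1) * r.eval (a 0) := by
    simpa [eval_comp] using congrArg (eval (a 0)) hr
  have hpow : a 0 ^ n = a 0 * a 0 ^ (n - 1) := by
    rw [← pow_succ', Nat.sub_add_cancel hn]
  have hl_pow : l⁻¹ ^ n * l ^ n = 1 := by
    rw [← mul_pow, inv_mul_cancel₀ hl, one_pow]
  simp only [weightedScaling, Matrix.cons_val]
  linear_combination (-a 0) * hr_eval + (a 0 ^ n * (μ⁻¹ ^ 6 * a 1 + r.eval (a 0))) * hl_pow +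
    r.eval (a 0) * hpow

end WeightedScaling

lemma C_inv_mul_sub_C_mul_mul {K : Type*} [Field K] {c : K} (hc : c ≠ 0) (d : K) (p q : K[X]) :
    C c⁻¹ * (p - C (c * d) * q) = C c⁻¹ * p - C d * q := by
  rw [mul_sub, ← mul_assoc, ← C_mul, inv_mul_cancel_left₀ hc]

theorem stmt3_general (n : ℕ) (hn : 2 ≤ n) (p₁ p₂ : Polynomial ℂ)
    (l μ : ℂ) (hl : l ≠ 0) (hμ : μ ≠ 0)
    (hcong : (X : Polynomial ℂ) ^ (n - 1) ∣ p₂ - C (μ ^ 6 * l) * p₁.comp (C l * X)) :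
    ∃ r : Polynomial ℂ,
      C (μ⁻¹ ^ 6) * p₂ - C l * p₁.comp (C l * X) = X ^ (n - 1) * r ∧
      ∀ F : (Fin 4 → ℂ) → Fin 4 → ℂ,
        (∀ a : Fin 4 → ℂ,
            F a = ![l * a 0, l⁻¹ ^ n * μ⁻¹ ^ 6 * a 1 + l⁻¹ ^ n * r.eval (a 0),
              μ⁻¹ ^ 3 * a 2, μ⁻¹ ^ 2 * a 3]) →
          Function.Bijective F ∧
          (∃ G : Fin 4 → MvPolynomial (Fin 4) ℂ,
            ∀ (a : Fin 4 → ℂ) (i : Fin 4), MvPolynomial.eval (F a) (G i) = a i) ∧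
          (∀ a : Fin 4 → ℂ,
            a 0 ^ n * a 1 + a 2 ^ 2 + a 3 ^ 3 + a 0 * p₂.eval (a 0) = 0 ↔
            (F a 0) ^ n * F a 1 + (F a 2) ^ 2 + (F a 3) ^ 3 + F a 0 * p₁.eval (F a 0) = 0) := by
  obtain ⟨s, hs⟩ := hcong
  have hr : C (μ⁻¹ ^ 6) * p₂ - C l * p₁.comp (C l * X) = X ^ (n - 1) * (C (μ⁻¹ ^ 6) * s) := by
    rw [inv_pow, ← C_inv_mul_sub_C_mul_mul (pow_ne_zero 6 hμ), hs, mul_left_comm]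
  refine ⟨_, hr, fun F hF => ?_⟩
  obtain rfl : F = weightedScaling n l μ (C (μ⁻¹ ^ 6) * s) := funext hF
  refine ⟨weightedScaling_bijective n _ hl hμ,
    ⟨_, eval_weightedScalingInv_weightedScaling n _ hl hμ⟩, fun a => ?_⟩
  rw [weightedScaling_equation n _ (by omega) hl hr a]
  simp [hμ]

/-- If `p₂(x) ≡ ε·p₁(λx) mod x^{n-1}` with `ε = μ⁶·l ≠ 0`, then the map
`(x,y,z,t) ↦ (l·x, l^{-n}μ^{-6}·y + l^{-n}·x^{-(n-1)}(μ^{-6}p₂(x) - l·p₁(lx)), μ^{-3}z, μ^{-2}t)`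
is a well-defined polynomial automorphism of `ℂ⁴` (its inverse is again polynomial)
mapping `{xⁿy + z² + t³ + x·p₂(x) = 0}` isomorphically onto
`{xⁿy + z² + t³ + x·p₁(x) = 0}`. -/
theorem stmt3 (n : ℕ) (hn : 2 ≤ n) (p₁ p₂ : Polynomial ℂ)
    (hp₁ : p₁.eval 0 ≠ 0) (hp₂ : p₂.eval 0 ≠ 0)
    (l μ : ℂ) (hl : l ≠ 0) (hμ : μ ≠ 0)
    (hcong : (X : Polynomial ℂ) ^ (n - 1) ∣ p₂ - C (μ ^ 6 * l) * p₁.comp (C l * X)) :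
    ∃ r : Polynomial ℂ,
      C (μ⁻¹ ^ 6) * p₂ - C l * p₁.comp (C l * X) = X ^ (n - 1) * r ∧
      ∀ F : (Fin 4 → ℂ) → Fin 4 → ℂ,
        (∀ a : Fin 4 → ℂ,
            F a = ![l * a 0, l⁻¹ ^ n * μ⁻¹ ^ 6 * a 1 + l⁻¹ ^ n * r.eval (a 0),
              μ⁻¹ ^ 3 * a 2, μ⁻¹ ^ 2 * a 3]) →
          Function.Bijective F ∧
          (∃ G : Fin 4 → MvPolynomial (Fin 4) ℂ,
            ∀ (a : Fin 4 → ℂ) (i : Fin 4), MvPolynomial.eval (F a) (G i) = a i) ∧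
          (∀ a : Fin 4 → ℂ,
            a 0 ^ n * a 1 + a 2 ^ 2 + a 3 ^ 3 + a 0 * p₂.eval (a 0) = 0 ↔
            (F a 0) ^ n * F a 1 + (F a 2) ^ 2 + (F a 3) ^ 3 + F a 0 * p₁.eval (F a 0) = 0) :=
  stmt3_general n hn p₁ p₂ l μ hl hμ hcong
end

section
/- Let h ∈ ℂ[z,t] and let r = z² + t³. If the Jacobian determinant Jac(r,h) = ∂r/∂z·∂h/∂t − ∂r/∂t·∂h/∂z lies in the principal ideal r·ℂ[z,t], then there exist γ ∈ ℂ[z,t] and c ∈ ℂ such that h = γ·r + c. -/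
/-!
The cusp `r = 0` is parametrised by `s ↦ (s³, -s²)`, and the kernel of restriction
`h ↦ h(s³, -s²)` is exactly `(r)`: dividing by `r` leaves `a(t) + b(t) z`, which restricts to the
sum of an even and an odd polynomial in `s`. By the chain rule
`s³ · d/ds h(s³, -s²) = -s · Jac(r, h)(s³, -s²)`, so the hypothesis makes `h` constant, say `c`,
along the cusp; hence `r ∣ h - c`.
-/

open MvPolynomial

theorem MvPolynomial.derivative_aeval {R σ : Type*} [CommRing R] [Fintype σ]
    (f : σ → Polynomial R) (p : MvPolynomial σ R) :
    Polynomial.derivative (aeval f p) =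
      ∑ i, aeval f (pderiv i p) * Polynomial.derivative (f i) := by
  classical
  induction p using MvPolynomial.induction_on with
  | C c => simp
  | add p q hp hq => simp only [map_add, hp, hq, add_mul, Finset.sum_add_distrib]
  | mul_X p j hp =>
    simp only [map_mul, aeval_X, Polynomial.derivative_mul, hp, Derivation.leibniz, pderiv_X,
      Pi.single_apply, smul_eq_mul, mul_ite, mul_one, mul_zero, map_add, add_mul,
      Finset.sum_add_distrib, apply_ite (aeval f), map_zero, ite_mul, zero_mul, Finset.sum_ite_eq,
      Finset.mem_univ, if_true]
    rw [Finset.sum_mul, add_comm]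
    exact congrArg₂ _ rfl (Finset.sum_congr rfl fun i _ ↦ by ring)

namespace Polynomial

variable {R : Type*} [CommRing R] [IsDomain R]

theorem comp_neg_X_sq_eq_zero_iff {a : R[X]} : a.comp (-X ^ 2) = 0 ↔ a = 0 := by
  refine ⟨fun h ↦ (comp_eq_zero_iff.mp h).resolve_right fun ⟨_, hC⟩ ↦ ?_, fun h ↦ by simp [h]⟩
  simpa using congrArg natDegree hC

/-- Substituting `-X` separates the even part `a(-X²)` from the odd part `b(-X²) X³`. -/
theorem eq_zero_of_comp_neg_X_sq_add_mul_X_pow_three_eq_zero [CharZero R] {a b : R[X]}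
    (H : a.comp (-X ^ 2) + b.comp (-X ^ 2) * X ^ 3 = 0) : a = 0 ∧ b = 0 := by
  have H' := congrArg (·.comp (-X)) H
  simp only [add_comp, mul_comp, comp_assoc, neg_comp, pow_comp, X_comp, zero_comp, neg_sq] at H'
  rw [Odd.neg_pow (by decide)] at H'
  have ha : 2 * a.comp (-X ^ 2) = 0 := by linear_combination H + H'
  have hb : 2 * b.comp (-X ^ 2) * X ^ 3 = 0 := by linear_combination H - H'
  simpa [comp_neg_X_sq_eq_zero_iff, X_ne_zero] using And.intro ha hb

end Polynomial

namespace MvPolynomial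

variable (R : Type*) [CommRing R]

noncomputable def cusp : MvPolynomial (Fin 2) R := X 0 ^ 2 + X 1 ^ 3

/-- Restriction to the cusp along its parametrisation `s ↦ (s³, -s²)`. -/
noncomputable def cuspParam : MvPolynomial (Fin 2) R →ₐ[R] Polynomial R :=
  aeval ![Polynomial.X ^ 3, -Polynomial.X ^ 2]

variable {R}

@[simp] theorem cuspParam_X_zero : cuspParam R (X 0) = Polynomial.X ^ 3 := by simp [cuspParam]

@[simp] theorem cuspParam_X_one : cuspParam R (X 1) = -Polynomial.X ^ 2 := by simp [cuspParam]

@[simp] theorem cuspParam_cusp : cuspParam R (cusp R) = 0 := by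
  simp only [cusp, map_add, map_pow, cuspParam_X_zero, cuspParam_X_one]
  ring

theorem cuspParam_aeval_X_one (a : Polynomial R) :
    cuspParam R (Polynomial.aeval (X 1) a) = a.comp (-Polynomial.X ^ 2) := by
  rw [Polynomial.comp_eq_aeval, ← Polynomial.aeval_algHom_apply, cuspParam_X_one]

theorem derivative_cuspParam (p : MvPolynomial (Fin 2) R) :
    Polynomial.derivative (cuspParam R p) =
      cuspParam R (pderiv 0 p) * (3 * Polynomial.X ^ 2) -
        cuspParam R (pderiv 1 p) * (2 * Polynomial.X) := by
  rw [cuspParam, derivative_aeval, Fin.sum_univ_two]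
  simp only [Matrix.cons_val_zero, Matrix.cons_val_one, Matrix.cons_val_fin_one,
    Polynomial.derivative_neg, Polynomial.derivative_X_pow, Nat.cast_ofNat, Polynomial.C_ofNat]
  ring

/-- Division by the cusp, which is monic of degree 2 in `z`. -/
theorem exists_eq_mul_cusp_add (p : MvPolynomial (Fin 2) R) :
    ∃ (γ : MvPolynomial (Fin 2) R) (a b : Polynomial R),
      p = γ * cusp R + Polynomial.aeval (X 1) a + Polynomial.aeval (X 1) b * X 0 := by
  induction p using MvPolynomial.induction_on with
  | C c => exact ⟨0, Polynomial.C c, 0, by simp⟩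
  | add p q hp hq =>
    obtain ⟨γ₁, a₁, b₁, rfl⟩ := hp
    obtain ⟨γ₂, a₂, b₂, rfl⟩ := hq
    exact ⟨γ₁ + γ₂, a₁ + a₂, b₁ + b₂, by simp only [map_add]; ring⟩
  | mul_X p i hp =>
    obtain ⟨γ, a, b, rfl⟩ := hp
    fin_cases i
    · refine ⟨γ * X 0 + Polynomial.aeval (X 1) b, -(Polynomial.X ^ 3 * b), a, ?_⟩
      simp only [Fin.zero_eta, cusp, map_neg, map_mul, map_pow, Polynomial.aeval_X]
      ring
    · refine ⟨γ * X 1, Polynomial.X * a, Polynomial.X * b, ?_⟩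
      simp only [Fin.mk_one, map_mul, Polynomial.aeval_X]
      ring

theorem cuspParam_eq_zero_iff [IsDomain R] [CharZero R] {p : MvPolynomial (Fin 2) R} :
    cuspParam R p = 0 ↔ cusp R ∣ p := by
  refine ⟨fun hp ↦ ?_, fun ⟨γ, hγ⟩ ↦ by simp [hγ]⟩
  obtain ⟨γ, a, b, rfl⟩ := exists_eq_mul_cusp_add p
  simp only [map_add, map_mul, cuspParam_cusp, mul_zero, zero_add, cuspParam_aeval_X_one,
    cuspParam_X_zero] at hp
  obtain ⟨rfl, rfl⟩ := Polynomial.eq_zero_of_comp_neg_X_sq_add_mul_X_pow_three_eq_zero hp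
  simp

theorem pderiv_zero_cusp : pderiv 0 (cusp R) = 2 * X 0 := by simp [cusp, pderiv_X]

theorem pderiv_one_cusp : pderiv 1 (cusp R) = 3 * X 1 ^ 2 := by simp [cusp, pderiv_X]

theorem X_pow_three_mul_derivative_cuspParam (p : MvPolynomial (Fin 2) R) :
    Polynomial.X ^ 3 * Polynomial.derivative (cuspParam R p) =
      -Polynomial.X * cuspParam R
        (pderiv 0 (cusp R) * pderiv 1 p - pderiv 1 (cusp R) * pderiv 0 p) := by
  simp only [derivative_cuspParam, pderiv_zero_cusp, pderiv_one_cusp, map_sub, map_mul, map_pow,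
    map_ofNat, cuspParam_X_zero, cuspParam_X_one]
  ring

theorem exists_cusp_dvd_sub_C_of_jacobian_mem [IsDomain R] [CharZero R]
    {p : MvPolynomial (Fin 2) R}
    (hjac : pderiv 0 (cusp R) * pderiv 1 p - pderiv 1 (cusp R) * pderiv 0 p ∈
      Ideal.span {cusp R}) :
    ∃ c : R, cusp R ∣ p - C c := by
  have hderiv : Polynomial.derivative (cuspParam R p) = 0 := by
    have hjac₀ := cuspParam_eq_zero_iff.mpr (Ideal.mem_span_singleton.mp hjac)
    simpa [hjac₀, Polynomial.X_ne_zero] using X_pow_three_mul_derivative_cuspParam p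
  refine ⟨(cuspParam R p).coeff 0, cuspParam_eq_zero_iff.mp ?_⟩
  rw [map_sub, algHom_C, Polynomial.algebraMap_eq, sub_eq_zero]
  exact Polynomial.eq_C_of_natDegree_eq_zero (Polynomial.derivative_eq_zero.mp hderiv)

end MvPolynomial

/-- If `Jac(r,h) ∈ r·ℂ[z,t]` for `r = z² + t³`, then `h = γ·r + c` for some `γ` and a
constant `c`.  Here `ℂ[z,t] = MvPolynomial (Fin 2) ℂ` with `z = X 0`, `t = X 1`. -/
theorem stmt6 (h : MvPolynomial (Fin 2) ℂ) (r : MvPolynomial (Fin 2) ℂ)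
    (hr : r = X 0 ^ 2 + X 1 ^ 3)
    (hjac : pderiv 0 r * pderiv 1 h - pderiv 1 r * pderiv 0 h ∈ Ideal.span {r}) :
    ∃ (γ : MvPolynomial (Fin 2) ℂ) (c : ℂ), h = γ * r + C c := by
  obtain rfl : r = cusp ℂ := hr
  obtain ⟨c, γ, hγ⟩ := exists_cusp_dvd_sub_C_of_jacobian_mem hjac
  exact ⟨γ, c, by linear_combination hγ⟩
end

section
/- Let n ≥ 2 and let g₁, g₂ ∈ ℂ[x] with g₁(0) = g₂(0) = 1 and g₁, g₂ relatively prime. Then the polynomials xⁿ·g₁, xⁿ·g₂ and g₁·g₂ generate the unit ideal in ℂ[x], and consequently there exist h₁, h₂, h₃ ∈ ℂ[x] such that the 3×3 matrix with rows (g₁, 0, xⁿ), (0, g₂, xⁿ), (h₁, h₂, h₃) has determinant a nonzero constant, i.e. lies in GL₃(ℂ[x]). -/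
open Polynomial

/-- If `g₁(0) = g₂(0) = 1` and `g₁, g₂` are coprime, then `xⁿg₁, xⁿg₂, g₁g₂` generate the
unit ideal of `ℂ[x]`, and there are `h₁, h₂, h₃` making the matrix with rows
`(g₁,0,xⁿ)`, `(0,g₂,xⁿ)`, `(h₁,h₂,h₃)` an element of `GL₃(ℂ[x])`. -/
theorem stmt8 (n : ℕ) (hn : 2 ≤ n) (g₁ g₂ : Polynomial ℂ)
    (h₁0 : g₁.eval 0 = 1) (h₂0 : g₂.eval 0 = 1) (hcop : IsCoprime g₁ g₂) :
    Ideal.span {X ^ n * g₁, X ^ n * g₂, g₁ * g₂} = (⊤ : Ideal (Polynomial ℂ)) ∧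
    ∃ h₁ h₂ h₃ : Polynomial ℂ,
      IsUnit (Matrix.det !![g₁, 0, X ^ n; 0, g₂, X ^ n; h₁, h₂, h₃]) := by
  obtain ⟨u, v, huv⟩ := hcop
  have hXg : IsCoprime (X ^ n) (g₁ * g₂) := by
    apply IsCoprime.pow_left
    have hdvd : X ∣ g₁ * g₂ - 1 := by
      rw [Polynomial.X_dvd_iff]
      simp [Polynomial.coeff_sub, Polynomial.coeff_zero_eq_eval_zero, h₁0, h₂0]
    obtain ⟨q, hq⟩ := hdvd
    exact ⟨-q, 1, by linear_combination hq⟩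
  obtain ⟨a, b, hab⟩ := hXg
  have key : (a * u) * (X ^ n * g₁) + (a * v) * (X ^ n * g₂) + b * (g₁ * g₂) = 1 := by
    linear_combination X ^ n * a * huv + hab
  constructor
  · rw [Ideal.eq_top_iff_one]
    have m1 : X ^ n * g₁ ∈ Ideal.span {X ^ n * g₁, X ^ n * g₂, g₁ * g₂} :=
      Ideal.subset_span (by simp)
    have m2 : X ^ n * g₂ ∈ Ideal.span {X ^ n * g₁, X ^ n * g₂, g₁ * g₂} :=
      Ideal.subset_span (by simp)
    have m3 : g₁ * g₂ ∈ Ideal.span {X ^ n * g₁, X ^ n * g₂, g₁ * g₂} :=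
      Ideal.subset_span (by simp)
    exact key ▸ Ideal.add_mem _ (Ideal.add_mem _ (Ideal.mul_mem_left _ _ m1)
      (Ideal.mul_mem_left _ _ m2)) (Ideal.mul_mem_left _ _ m3)
  · refine ⟨-(a * v), -(a * u), b, ?_⟩
    have hdet : Matrix.det !![g₁, 0, X ^ n; 0, g₂, X ^ n; -(a * v), -(a * u), b] = 1 := by
      simp [Matrix.det_fin_three]
      linear_combination key
    rw [hdet]; exact isUnit_one
end

section
/- Let n ≥ 2 and q ∈ ℂ[x,z,t] with q(0,0,0) ≠ 0. Identify the coordinate ring A of V_{n,q} = {xⁿy + z² + t³ + x·q = 0} with the subalgebra ℂ[x,z,t][x^{-n}(z²+t³+x·q)] of ℂ[x^{±1},z,t]. Then the ideal I_{n,q} = (xⁿ, z²+t³+x·q) of ℂ[x,z,t] satisfies I_{n,q} = xⁿ·A ∩ ℂ[x,z,t]. -/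
/-!
Write `R = ℂ[x,z,t]`, `P = z² + t³ + x q` and `w = P / xⁿ`, so that `A = R[w]`. Every `a ∈ A` is
`a₀ + w b` with `a₀ ∈ R` and `b ∈ A`, whence `xⁿ a = xⁿ a₀ + P b`. If `xⁿ a ∈ R` then `P b ∈ R`;
as `b` becomes a polynomial after multiplication by a power of `x`, and the prime `x` does not
divide `P`, this forces `b ∈ R`, so `xⁿ a ∈ (xⁿ, P)`.
-/

open MvPolynomial LaurentPolynomial
open scoped Polynomial

section

variable {R S : Type*} [CommRing R] [CommRing S] {φ : R →+* S}

theorem RingHom.mem_range_of_pow_mul_mem_range_of_mul_mem_range (hφ : Function.Injective φ)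
    {x P : R} (hx : Prime x) (hxP : ¬ x ∣ P) (hu : IsUnit (φ x)) {b : S} {m : ℕ}
    (hm : φ x ^ m * b ∈ φ.range) (hP : φ P * b ∈ φ.range) : b ∈ φ.range := by
  induction m with
  | zero => simpa using hm
  | succ m ih =>
    obtain ⟨c, hc⟩ := hm
    obtain ⟨d, hd⟩ := hP
    have hcd : P * c = x * (x ^ m * d) :=
      hφ (by simp only [map_mul, map_pow, hc, hd]; ring)
    obtain ⟨c', rfl⟩ := (hx.dvd_or_dvd ⟨_, hcd⟩).resolve_left hxP
    refine ih ⟨c', hu.mul_left_cancel ?_⟩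
    rw [← map_mul, hc, pow_succ]
    ring

theorem Polynomial.exists_pow_mul_eval₂_mem_range {x : R} {n : ℕ} {w : S}
    (hw : φ x ^ n * w ∈ φ.range) (p : R[X]) : ∃ m, φ x ^ m * p.eval₂ φ w ∈ φ.range := by
  induction p using Polynomial.induction_on' with
  | add p q hp hq =>
    obtain ⟨k, hk⟩ := hp
    obtain ⟨l, hl⟩ := hq
    refine ⟨k + l, ?_⟩
    have hxl := pow_mem (φ.mem_range_self x) l
    have hxk := pow_mem (φ.mem_range_self x) k
    convert add_mem (mul_mem hxl hk) (mul_mem hxk hl) using 1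
    rw [Polynomial.eval₂_add]
    ring
  | monomial k r =>
    refine ⟨n * k, ?_⟩
    rw [Polynomial.eval₂_monomial, pow_mul, mul_left_comm, ← mul_pow]
    exact mul_mem ⟨r, rfl⟩ (pow_mem hw k)

theorem mem_span_pow_pair_iff_exists_eval₂ (hφ : Function.Injective φ) {x P : R}
    (hx : Prime x) (hxP : ¬ x ∣ P) (hu : IsUnit (φ x)) {n : ℕ} {w : S}
    (hw : φ x ^ n * w = φ P) (f : R) :
    f ∈ Ideal.span {x ^ n, P} ↔ ∃ p : R[X], φ f = φ x ^ n * p.eval₂ φ w := by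
  constructor
  · intro hf
    obtain ⟨u, v, rfl⟩ := Ideal.mem_span_pair.mp hf
    refine ⟨Polynomial.C u + Polynomial.C v * Polynomial.X, ?_⟩
    simp only [Polynomial.eval₂_add, Polynomial.eval₂_mul, Polynomial.eval₂_C,
      Polynomial.eval₂_X, map_add, map_mul, map_pow, ← hw]
    ring
  · rintro ⟨p, hp⟩
    set b := p.divX.eval₂ φ w
    have hpb : p.eval₂ φ w = φ (p.coeff 0) + w * b := by
      conv_lhs => rw [← p.X_mul_divX_add]
      simp only [Polynomial.eval₂_add, Polynomial.eval₂_mul, Polynomial.eval₂_C,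
        Polynomial.eval₂_X]
      ring
    have hPb : φ P * b = φ (f - x ^ n * p.coeff 0) := by
      rw [map_sub, hp, hpb, ← hw, map_mul, map_pow]
      ring
    obtain ⟨m, hm⟩ := p.divX.exists_pow_mul_eval₂_mem_range ⟨P, hw.symm⟩
    obtain ⟨c, hc⟩ : b ∈ φ.range :=
      RingHom.mem_range_of_pow_mul_mem_range_of_mul_mem_range hφ hx hxP hu hm ⟨_, hPb.symm⟩
    rw [← hc, map_sub, map_mul] at hPb
    refine Ideal.mem_span_pair.mpr ⟨p.coeff 0, c, hφ ?_⟩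
    rw [map_add, map_mul, map_mul]
    linear_combination hPb

end

theorem Algebra.mem_adjoin_insert_iff_exists_eval₂ {K A S : Type*} [CommSemiring K]
    [CommSemiring A] [CommSemiring S] [Algebra K A] [Algebra K S] (ι : A →ₐ[K] S) {s : Set S}
    (hs : Algebra.adjoin K s = ι.range) (w a : S) :
    a ∈ Algebra.adjoin K (insert w s) ↔ ∃ p : A[X], p.eval₂ ι w = a := by
  constructor
  · intro ha
    induction ha using Algebra.adjoin_induction with
    | mem x hx =>
      obtain rfl | hx := hx
      · exact ⟨Polynomial.X, Polynomial.eval₂_X _ _⟩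
      · obtain ⟨r, rfl⟩ : x ∈ ι.range := hs ▸ Algebra.subset_adjoin hx
        exact ⟨Polynomial.C r, Polynomial.eval₂_C _ _⟩
    | algebraMap r => exact ⟨Polynomial.C (algebraMap K A r), by simp⟩
    | add x y _ _ hx hy =>
      obtain ⟨p, rfl⟩ := hx
      obtain ⟨q, rfl⟩ := hy
      exact ⟨p + q, Polynomial.eval₂_add _ _⟩
    | mul x y _ _ hx hy =>
      obtain ⟨p, rfl⟩ := hx
      obtain ⟨q, rfl⟩ := hy
      exact ⟨p * q, Polynomial.eval₂_mul _ _⟩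
  · rintro ⟨p, rfl⟩
    induction p using Polynomial.induction_on' with
    | add p q hp hq => exact Polynomial.eval₂_add (ι : A →+* S) w ▸ add_mem hp hq
    | monomial k r =>
      rw [Polynomial.eval₂_monomial]
      have hr : ι r ∈ Algebra.adjoin K s := hs ▸ ⟨r, rfl⟩
      exact mul_mem (Algebra.adjoin_mono (Set.subset_insert w s) hr)
        (pow_mem (Algebra.subset_adjoin (Set.mem_insert w s)) k)

noncomputable def laurentEmbedding :
    MvPolynomial (Fin 3) ℂ →ₐ[ℂ] MvPolynomial (Fin 2) (LaurentPolynomial ℂ) :=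
  aeval ![MvPolynomial.C (T 1), X 0, X 1]

theorem laurentEmbedding_injective : Function.Injective laurentEmbedding := by
  have h1 : _root_.finSuccEquiv 2 1 = some 0 := rfl
  have h2 : _root_.finSuccEquiv 2 2 = some 1 := rfl
  -- `ℂ[x,z,t] ≃ (ℂ[x])[z,t] ↪ ℂ[x^{±1}][z,t]`
  have h : laurentEmbedding = (mapAlgHom Polynomial.toLaurentAlg).comp
      ((optionEquivRight ℂ (Fin 2)).toAlgHom.comp
        (renameEquiv ℂ (_root_.finSuccEquiv 2)).toAlgHom) := by
    apply algHom_ext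
    intro i
    fin_cases i <;> simp [laurentEmbedding, Polynomial.toLaurentAlg_apply, h1, h2]
  rw [h]
  exact (map_injective _ Polynomial.toLaurent_injective).comp
    ((optionEquivRight ℂ (Fin 2)).injective.comp
      (renameEquiv ℂ (_root_.finSuccEquiv 2)).injective)

theorem laurentEmbedding_X_zero : laurentEmbedding (X 0) = MvPolynomial.C (T 1) := by
  simp [laurentEmbedding]

theorem laurentEmbedding_X_zero_pow (n : ℕ) :
    laurentEmbedding (X 0) ^ n = MvPolynomial.C (T n) := by
  rw [laurentEmbedding_X_zero, ← map_pow, T_pow, mul_one]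

theorem adjoin_eq_range_laurentEmbedding :
    Algebra.adjoin ℂ {MvPolynomial.C (T 1), X 0, X 1} = laurentEmbedding.range := by
  rw [laurentEmbedding, ← Algebra.adjoin_range_eq_range_aeval]
  simp [Matrix.range_cons, Set.insert_comm, Set.pair_comm]

theorem X_zero_not_dvd_cusp_add_X_zero_mul (q : MvPolynomial (Fin 3) ℂ) :
    ¬ (X 0 : MvPolynomial (Fin 3) ℂ) ∣ X 1 ^ 2 + X 2 ^ 3 + X 0 * q := by
  rintro ⟨c, hc⟩
  simpa using congrArg (eval ![0, 1, 0]) hc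

theorem stmt17_general (n : ℕ) (q : MvPolynomial (Fin 3) ℂ)
    (ι : MvPolynomial (Fin 3) ℂ →ₐ[ℂ] MvPolynomial (Fin 2) (LaurentPolynomial ℂ))
    (hι : ι = aeval ![MvPolynomial.C (T 1), X 0, X 1])
    (w : MvPolynomial (Fin 2) (LaurentPolynomial ℂ))
    (hw : w = MvPolynomial.C (T (-(n : ℤ))) *
        (X 0 ^ 2 + X 1 ^ 3 + MvPolynomial.C (T 1) * ι q)) :
    ∀ f : MvPolynomial (Fin 3) ℂ,
      f ∈ Ideal.span {(X 0 ^ n : MvPolynomial (Fin 3) ℂ),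
          X 1 ^ 2 + X 2 ^ 3 + X 0 * q} ↔
      ∃ a ∈ Algebra.adjoin ℂ
          ({MvPolynomial.C (T 1), X 0, X 1, w} :
            Set (MvPolynomial (Fin 2) (LaurentPolynomial ℂ))),
        ι f = MvPolynomial.C (T (n : ℤ)) * a := by
  obtain rfl : ι = laurentEmbedding := hι
  have hunit : IsUnit (laurentEmbedding (X 0)) :=
    laurentEmbedding_X_zero ▸ (isUnit_T 1).map MvPolynomial.C
  have hxw :
      laurentEmbedding (X 0) ^ n * w = laurentEmbedding (X 1 ^ 2 + X 2 ^ 3 + X 0 * q) := by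
    rw [laurentEmbedding_X_zero_pow, hw, ← mul_assoc, ← map_mul, ← T_add, add_neg_cancel, T_zero,
      map_one, one_mul]
    simp [laurentEmbedding]
  have hgens : ({MvPolynomial.C (T 1), X 0, X 1, w} : Set (MvPolynomial (Fin 2) ℂ[T;T⁻¹])) =
      insert w {MvPolynomial.C (T 1), X 0, X 1} := by
    ext a
    simp only [Set.mem_insert_iff, Set.mem_singleton_iff]
    tauto
  intro f
  rw [mem_span_pow_pair_iff_exists_eval₂ (φ := laurentEmbedding.toRingHom)
    laurentEmbedding_injective X_prime (X_zero_not_dvd_cusp_add_X_zero_mul q) hunit hxw, hgens]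
  simp only [Algebra.mem_adjoin_insert_iff_exists_eval₂ _ adjoin_eq_range_laurentEmbedding,
    exists_exists_eq_and, AlgHom.toRingHom_eq_coe, RingHom.coe_coe, laurentEmbedding_X_zero_pow]

/-- Identify the coordinate ring `A` of `V_{n,q}` with the subalgebra
`ℂ[x,z,t][w]`, `w = x^{-n}(z²+t³+x·q)`, of `ℂ[x^{±1},z,t]`.  Then the ideal
`I_{n,q} = (xⁿ, z²+t³+x·q)` of `ℂ[x,z,t]` equals `xⁿ·A ∩ ℂ[x,z,t]`.
Here `ℂ[x^{±1},z,t] = MvPolynomial (Fin 2) (LaurentPolynomial ℂ)` with `x = C (T 1)`,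
`z = X 0`, `t = X 1`; `ℂ[x,z,t] = MvPolynomial (Fin 3) ℂ` (variables `x,z,t`) with
embedding `ι = aeval ![C (T 1), X 0, X 1]`. -/
theorem stmt17 (n : ℕ) (hn : 2 ≤ n) (q : MvPolynomial (Fin 3) ℂ)
    (hq : eval (fun _ => (0 : ℂ)) q ≠ 0)
    (ι : MvPolynomial (Fin 3) ℂ →ₐ[ℂ] MvPolynomial (Fin 2) (LaurentPolynomial ℂ))
    (hι : ι = aeval ![MvPolynomial.C (T 1), X 0, X 1])
    (w : MvPolynomial (Fin 2) (LaurentPolynomial ℂ))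
    (hw : w = MvPolynomial.C (T (-(n : ℤ))) *
        (X 0 ^ 2 + X 1 ^ 3 + MvPolynomial.C (T 1) * ι q)) :
    ∀ f : MvPolynomial (Fin 3) ℂ,
      f ∈ Ideal.span {(X 0 ^ n : MvPolynomial (Fin 3) ℂ),
          X 1 ^ 2 + X 2 ^ 3 + X 0 * q} ↔
      ∃ a ∈ Algebra.adjoin ℂ
          ({MvPolynomial.C (T 1), X 0, X 1, w} :
            Set (MvPolynomial (Fin 2) (LaurentPolynomial ℂ))),
        ι f = MvPolynomial.C (T (n : ℤ)) * a :=
  stmt17_general n q ι hι w hw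
end
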